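/- Let w be a word over {1,…,n} and S, T ⊆ {1,…,n} with |S| = |T|, S < T, and |w|_S ≤ |w|_T. Then there exists N ∈ [S,T] with N ≠ S such that [S,N] has chain length at most n and |w|_M ≤ |w|_N for all M ∈ [S,N]. -/

import Mathlib

/-- The i-th smallest element (0-indexed) of a finite set of naturals. -/
def nth (S : Finset ℕ) (i : ℕ) : ℕ := (S.sort (· ≤ ·)).getD i 0

/-- The order on 2^[n]: S ≤ T iff |S| ≥ |T| and S^i ≤ T^i for i ≤ |T|. -/
def gale (S T : Finset ℕ) : Prop :=
  T.card ≤ S.card ∧ ∀ i < T.card, nth S i ≤ nth T i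

/-- |w|_N : number of occurrences in w of letters from N. -/
def wcount (w : List ℕ) (N : Finset ℕ) : ℕ := (w.filter (· ∈ N)).length

/-- A strictly increasing chain from S to T inside the order interval [S,T]. -/
def isChain (S T : Finset ℕ) (P : List (Finset ℕ)) : Prop :=
  P.head? = some S ∧ P.getLast? = some T ∧
  P.Chain' (fun A B => gale A B ∧ A ≠ B) ∧
  ∀ Q ∈ P, gale S Q ∧ gale Q T

/-- The join S ∨ T in 2^[n]. -/
def galeJoin (S T : Finset ℕ) : Finset ℕ :=
  (Finset.range (min S.card T.card)).image fun i => max (nth S i) (nth T i)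

/-- The meet S ∧ T in 2^[n]. -/
def galeMeet (S T : Finset ℕ) : Finset ℕ :=
  ((Finset.range (min S.card T.card)).image fun i => min (nth S i) (nth T i)) ∪
    (if T.card ≤ S.card then (Finset.Ico T.card S.card).image (nth S)
     else (Finset.Ico S.card T.card).image (nth T))

/-!
Among the sets `N` with `S < N ≤ T` and `|w|_S ≤ |w|_N`, take one of least rank `∑ N`.
If `N_j > S_{j+1}` for some `j`, uncross the pairs `(S_{i+1}, N_i)`: the sets
`X = (S_0, max(S_1, N_0), …, max(S_{k-1}, N_{k-2}))` and
`Y = (min(N_0, S_1), …, min(N_{k-2}, S_{k-1}), N_{k-1})` lie in `[S, N]`, both differ from `S`,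
and `X + Y = S + N` as multisets. Hence one of them still has `|w|_S ≤ |w|_·` while its rank is
below that of `N`, a contradiction. So `S` and `N` interlace, `N_j ≤ S_{j+1}`, which gives
`∑ N - ∑ S ≤ N_{k-1} - S_0 < n`. The rank strictly increases along chains of equal-size sets, so a
chain in `[S, N]` has at most `n` members, and minimality of `N` makes `|w|_N` maximal on `[S, N]`.
-/

open Finset

lemma nth_eq_orderEmbOfFin {M : Finset ℕ} {k : ℕ} (h : M.card = k) {i : ℕ} (hi : i < k) :
    nth M i = M.orderEmbOfFin h ⟨i, hi⟩ := by
  subst h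
  rw [nth, orderEmbOfFin_apply, List.getD_eq_getElem _ _ (by simpa using hi)]
  rfl

lemma nth_mem {M : Finset ℕ} {i : ℕ} (hi : i < M.card) : nth M i ∈ M := by
  rw [nth_eq_orderEmbOfFin rfl hi]
  exact orderEmbOfFin_mem _ _ _

lemma strictMonoOn_nth (M : Finset ℕ) : StrictMonoOn (nth M) (Set.Iio M.card) := by
  intro i hi j hj hij
  rw [nth_eq_orderEmbOfFin rfl hi, nth_eq_orderEmbOfFin rfl hj]
  exact (M.orderEmbOfFin rfl).strictMono hij

lemma card_image_range {k : ℕ} {X : ℕ → ℕ} (hX : StrictMonoOn X (Set.Iio k)) :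
    ((range k).image X).card = k := by
  rw [card_image_of_injOn (by simpa using hX.injOn), card_range]

lemma nth_image_range {k : ℕ} {X : ℕ → ℕ} (hX : StrictMonoOn X (Set.Iio k)) {i : ℕ}
    (hi : i < k) : nth ((range k).image X) i = X i := by
  have hunique := orderEmbOfFin_unique (card_image_range hX) (f := fun j : Fin k => X j)
    (fun j => mem_image_of_mem X (mem_range.2 j.2)) (fun a b hab => hX a.2 b.2 hab)
  rw [nth_eq_orderEmbOfFin (card_image_range hX) hi, ← congrFun hunique ⟨i, hi⟩]

lemma image_range_nth (M : Finset ℕ) : (range M.card).image (nth M) = M :=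
  eq_of_subset_of_card_le (image_subset_iff.2 fun _ hi => nth_mem (mem_range.1 hi))
    (card_image_range (strictMonoOn_nth M)).ge

lemma sum_eq_sum_range_nth {β : Type*} [AddCommMonoid β] (M : Finset ℕ) (g : ℕ → β) :
    ∑ v ∈ M, g v = ∑ i ∈ range M.card, g (nth M i) := by
  conv_lhs => rw [← image_range_nth M]
  exact sum_image (by simpa using (strictMonoOn_nth M).injOn)

lemma wcount_eq_sum_count (w : List ℕ) (M : Finset ℕ) : wcount w M = ∑ v ∈ M, w.count v := by
  rw [wcount, ← Multiset.coe_card,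
    ← Multiset.sum_count_eq_card (s := M) (fun a ha => by simp_all)]
  refine sum_congr rfl fun v hv => ?_
  simp [List.count_filter, hv]

lemma gale_refl (M : Finset ℕ) : gale M M := ⟨le_rfl, fun _ _ => le_rfl⟩

lemma gale_trans {A B C : Finset ℕ} (hAB : gale A B) (hBC : gale B C) : gale A C :=
  ⟨hBC.1.trans hAB.1, fun i hi => (hAB.2 i (hi.trans_le hBC.1)).trans (hBC.2 i hi)⟩

lemma card_eq_of_gale {A B C : Finset ℕ} (hAB : gale A B) (hBC : gale B C)
    (hCA : C.card = A.card) : B.card = A.card :=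
  le_antisymm hAB.1 (hCA ▸ hBC.1)

lemma gale_image_range {M : Finset ℕ} {k : ℕ} {X : ℕ → ℕ} (hk : M.card = k)
    (hX : StrictMonoOn X (Set.Iio k)) (h : ∀ i < k, nth M i ≤ X i) :
    gale M ((range k).image X) := by
  refine ⟨(card_image_range hX).trans_le hk.ge, fun i hi => ?_⟩
  rw [card_image_range hX] at hi
  rw [nth_image_range hX hi]
  exact h i hi

lemma image_range_gale {M : Finset ℕ} {k : ℕ} {X : ℕ → ℕ} (hk : M.card = k)
    (hX : StrictMonoOn X (Set.Iio k)) (h : ∀ i < k, X i ≤ nth M i) :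
    gale ((range k).image X) M := by
  refine ⟨hk.trans_le (card_image_range hX).ge, fun i hi => ?_⟩
  rw [hk] at hi
  rw [nth_image_range hX hi]
  exact h i hi

def galeRank (M : Finset ℕ) : ℕ := ∑ v ∈ M, v

lemma galeRank_eq_sum_nth (M : Finset ℕ) : galeRank M = ∑ i ∈ range M.card, nth M i :=
  sum_eq_sum_range_nth M id

lemma galeRank_le_galeRank {A B : Finset ℕ} (h : gale A B) (hc : A.card = B.card) :
    galeRank A ≤ galeRank B := by
  rw [galeRank_eq_sum_nth, galeRank_eq_sum_nth, hc]
  exact sum_le_sum fun i hi => h.2 i (mem_range.1 hi)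

lemma eq_of_gale_of_galeRank_le {A B : Finset ℕ} (h : gale A B) (hc : A.card = B.card)
    (hle : galeRank B ≤ galeRank A) : A = B := by
  have hpt : ∀ i ∈ range B.card, nth A i ≤ nth B i := fun i hi => h.2 i (mem_range.1 hi)
  rw [galeRank_eq_sum_nth, galeRank_eq_sum_nth, hc] at hle
  have hsum := (sum_eq_sum_iff_of_le hpt).1 (le_antisymm (sum_le_sum hpt) hle)
  rw [← image_range_nth A, ← image_range_nth B, hc]
  exact image_congr hsum

lemma galeRank_lt_galeRank {A B : Finset ℕ} (h : gale A B) (hc : A.card = B.card)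
    (hne : A ≠ B) : galeRank A < galeRank B :=
  lt_of_not_ge fun hle => hne (eq_of_gale_of_galeRank_le h hc hle)

lemma length_add_galeRank_le_of_isChain {S N : Finset ℕ} {P : List (Finset ℕ)}
    (hcard : N.card = S.card) (hP : isChain S N P) :
    P.length + galeRank S ≤ galeRank N + 1 := by
  obtain ⟨hhead, -, hchain, hmem⟩ := hP
  have hcardP : ∀ Q ∈ P, Q.card = S.card := fun Q hQ =>
    card_eq_of_gale (hmem Q hQ).1 (hmem Q hQ).2 hcard
  have hranks : (P.map galeRank).Pairwise (· < ·) := by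
    refine List.isChain_iff_pairwise.1 ((List.isChain_map galeRank).2 ?_)
    exact List.IsChain.imp_of_mem_imp (fun A B hA hB hAB => galeRank_lt_galeRank hAB.1
      ((hcardP A hA).trans (hcardP B hB).symm) hAB.2) hchain
  have hsub : (P.map galeRank).toFinset ⊆ Icc (galeRank S) (galeRank N) := by
    intro r hr
    simp only [List.mem_toFinset, List.mem_map] at hr
    obtain ⟨Q, hQ, rfl⟩ := hr
    exact mem_Icc.2 ⟨galeRank_le_galeRank (hmem Q hQ).1 (hcardP Q hQ).symm,
      galeRank_le_galeRank (hmem Q hQ).2 ((hcardP Q hQ).trans hcard.symm)⟩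
  have hSN : galeRank S ≤ galeRank N :=
    galeRank_le_galeRank (hmem S (List.mem_of_head? hhead)).2 hcard.symm
  have hlen := card_le_card hsub
  rw [List.toFinset_card_of_nodup (hranks.imp ne_of_lt), List.length_map, Nat.card_Icc] at hlen
  omega

section Uncross

variable {a b : ℕ → ℕ} {k : ℕ}

def upperMerge (a b : ℕ → ℕ) : ℕ → ℕ
  | 0 => a 0
  | i + 1 => max (a (i + 1)) (b i)

def lowerMerge (a b : ℕ → ℕ) (k i : ℕ) : ℕ :=
  if i + 1 < k then min (b i) (a (i + 1)) else b i

lemma le_upperMerge (i : ℕ) : a i ≤ upperMerge a b i := by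
  cases i with
  | zero => exact le_rfl
  | succ i => exact le_max_left _ _

lemma upperMerge_le (hb : StrictMonoOn b (Set.Iio k)) (hab : ∀ i < k, a i ≤ b i) {i : ℕ}
    (hi : i < k) : upperMerge a b i ≤ b i := by
  cases i with
  | zero => exact hab 0 hi
  | succ i => exact max_le (hab _ hi) (hb (by simp; omega) hi (by omega)).le

lemma le_lowerMerge (ha : StrictMonoOn a (Set.Iio k)) (hab : ∀ i < k, a i ≤ b i) {i : ℕ}
    (hi : i < k) : a i ≤ lowerMerge a b k i := by
  unfold lowerMerge
  split_ifs with h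
  · exact le_min (hab i hi) (ha hi h (by omega)).le
  · exact hab i hi

lemma lowerMerge_le (i : ℕ) : lowerMerge a b k i ≤ b i := by
  unfold lowerMerge
  split_ifs
  · exact min_le_left _ _
  · exact le_rfl

lemma strictMonoOn_upperMerge (ha : StrictMonoOn a (Set.Iio k))
    (hb : StrictMonoOn b (Set.Iio k)) : StrictMonoOn (upperMerge a b) (Set.Iio k) := by
  intro i hi j hj hij
  simp only [Set.mem_Iio] at hi hj
  obtain ⟨j, rfl⟩ : ∃ j', j = j' + 1 := ⟨j - 1, by omega⟩
  have haj : a i < a (j + 1) := ha hi hj hij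
  cases i with
  | zero => exact haj.trans_le (le_max_left _ _)
  | succ i =>
    exact max_lt (haj.trans_le (le_max_left _ _))
      ((hb (by simp; omega) (by simp; omega) (by omega)).trans_le (le_max_right _ _))

lemma strictMonoOn_lowerMerge (ha : StrictMonoOn a (Set.Iio k))
    (hb : StrictMonoOn b (Set.Iio k)) : StrictMonoOn (lowerMerge a b k) (Set.Iio k) := by
  intro i hi j hj hij
  simp only [Set.mem_Iio] at hi hj
  have hbij : lowerMerge a b k i < b j := (lowerMerge_le i).trans_lt (hb hi hj hij)
  have hi1 : i + 1 < k := by omega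
  unfold lowerMerge at hbij ⊢
  rw [if_pos hi1] at hbij ⊢
  split_ifs with hj1
  · exact lt_min hbij ((min_le_right _ _).trans_lt (ha hi1 hj1 (by omega)))
  · exact hbij

lemma sum_upperMerge_add_sum_lowerMerge {β : Type*} [AddCommMonoid β] (g : ℕ → β) :
    ∑ i ∈ range k, g (upperMerge a b i) + ∑ i ∈ range k, g (lowerMerge a b k i) =
      ∑ i ∈ range k, g (a i) + ∑ i ∈ range k, g (b i) := by
  cases k with
  | zero => simp
  | succ m =>
    have hmid : ∀ i ∈ range m, g (upperMerge a b (i + 1)) + g (lowerMerge a b (m + 1) i) =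
        g (a (i + 1)) + g (b i) := by
      intro i hi
      rw [lowerMerge, if_pos (by simpa using hi), upperMerge]
      rcases le_total (a (i + 1)) (b i) with h | h
      · rw [max_eq_right h, min_eq_right h, add_comm]
      · rw [max_eq_left h, min_eq_left h]
    rw [sum_range_succ', sum_range_succ _ m, sum_range_succ' (fun i => g (a i)),
      sum_range_succ (fun i => g (b i)), lowerMerge, if_neg (by omega), upperMerge]
    have := sum_congr rfl hmid
    rw [sum_add_distrib, sum_add_distrib] at this
    rw [add_add_add_comm, this, add_add_add_comm]

end Uncross

lemma exists_uncross {S N : Finset ℕ} (hSN : gale S N) (hcard : N.card = S.card) {j : ℕ}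
    (hj : j + 1 < S.card) (hcross : nth S (j + 1) < nth N j) :
    ∃ X Y : Finset ℕ, gale S X ∧ gale X N ∧ X ≠ S ∧ gale S Y ∧ gale Y N ∧ Y ≠ S ∧
      ∀ g : ℕ → ℕ, ∑ v ∈ X, g v + ∑ v ∈ Y, g v = ∑ v ∈ S, g v + ∑ v ∈ N, g v := by
  have ha := strictMonoOn_nth S
  have hb : StrictMonoOn (nth N) (Set.Iio S.card) := hcard ▸ strictMonoOn_nth N
  have hab : ∀ i < S.card, nth S i ≤ nth N i := fun i hi => hSN.2 i (hcard ▸ hi)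
  have hU := strictMonoOn_upperMerge ha hb
  have hL := strictMonoOn_lowerMerge ha hb
  refine ⟨(range S.card).image (upperMerge (nth S) (nth N)),
    (range S.card).image (lowerMerge (nth S) (nth N) S.card),
    gale_image_range rfl hU fun i _ => le_upperMerge i,
    image_range_gale hcard hU fun i hi => upperMerge_le hb hab hi, fun hX => ?_,
    gale_image_range rfl hL fun i hi => le_lowerMerge ha hab hi,
    image_range_gale hcard hL fun i _ => lowerMerge_le i, fun hY => ?_, fun g => ?_⟩
  · have h := congrArg (nth · (j + 1)) hX
    simp only [nth_image_range hU hj, upperMerge] at h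
    exact (lt_max_of_lt_right hcross).ne' h
  · have h := congrArg (nth · j) hY
    simp only [nth_image_range hL (by omega : j < S.card), lowerMerge, if_pos hj] at h
    have hSj : nth S j < nth S (j + 1) := ha (by simp; omega) hj (lt_add_one j)
    exact (lt_min (hSj.trans hcross) hSj).ne' h
  · rw [sum_image (by simpa using hU.injOn), sum_image (by simpa using hL.injOn),
      sum_eq_sum_range_nth S, sum_eq_sum_range_nth N, hcard]
    exact sum_upperMerge_add_sum_lowerMerge g

lemma nth_le_nth_succ_of_minimal {w : List ℕ} {S N : Finset ℕ} (hSN : gale S N)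
    (hcard : N.card = S.card) (hwN : wcount w S ≤ wcount w N)
    (hmin : ∀ M, gale S M → gale M N → M ≠ S → wcount w S ≤ wcount w M →
      galeRank N ≤ galeRank M)
    {j : ℕ} (hj : j + 1 < S.card) : nth N j ≤ nth S (j + 1) := by
  by_contra! hcross
  obtain ⟨X, Y, hSX, hXN, hXS, hSY, hYN, hYS, hsum⟩ := exists_uncross hSN hcard hj hcross
  have hX := galeRank_lt_galeRank hSX (card_eq_of_gale hSX hXN hcard).symm hXS.symm
  have hY := galeRank_lt_galeRank hSY (card_eq_of_gale hSY hYN hcard).symm hYS.symm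
  have hrank : galeRank X + galeRank Y = galeRank S + galeRank N := hsum id
  have hw : wcount w X + wcount w Y = wcount w S + wcount w N := by
    simp only [wcount_eq_sum_count]
    exact hsum _
  rcases le_or_gt (wcount w S) (wcount w X) with hwX | hwX
  · have := hmin X hSX hXN hXS hwX
    omega
  · have := hmin Y hSY hYN hYS (by omega)
    omega

lemma wcount_le_of_minimal {w : List ℕ} {S N : Finset ℕ} (hcard : N.card = S.card)
    (hwN : wcount w S ≤ wcount w N)
    (hmin : ∀ M, gale S M → gale M N → M ≠ S → wcount w S ≤ wcount w M →
      galeRank N ≤ galeRank M)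
    {M : Finset ℕ} (hSM : gale S M) (hMN : gale M N) : wcount w M ≤ wcount w N := by
  by_contra! hlt
  have hMS : M ≠ S := by
    rintro rfl
    omega
  have hMcard := card_eq_of_gale hSM hMN hcard
  have hMN' := eq_of_gale_of_galeRank_le hMN (hMcard.trans hcard.symm)
    (hmin M hSM hMN hMS (by omega))
  exact hlt.ne' (congrArg (wcount w) hMN')

lemma galeRank_lt_add_of_interlace {S N : Finset ℕ} {n : ℕ} (hcard : N.card = S.card)
    (hpos : 0 < S.card) (hS : 1 ≤ nth S 0) (hN : nth N (S.card - 1) ≤ n)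
    (hinter : ∀ j, j + 1 < S.card → nth N j ≤ nth S (j + 1)) :
    galeRank N < galeRank S + n := by
  obtain ⟨m, hm⟩ : ∃ m, S.card = m + 1 := ⟨S.card - 1, by omega⟩
  rw [galeRank_eq_sum_nth, galeRank_eq_sum_nth, hcard, hm, sum_range_succ, sum_range_succ']
  rw [hm, Nat.add_sub_cancel] at hN
  have := sum_le_sum fun i (hi : i ∈ range m) => hinter i (by rw [hm]; simpa using hi)
  omega

theorem stmt_12_general (n : ℕ) (w : List ℕ)
    (S T : Finset ℕ) (hS : S ⊆ Finset.Icc 1 n) (hT : T ⊆ Finset.Icc 1 n)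
    (hcard : S.card = T.card) (hST : gale S T) (hne : S ≠ T)
    (hw' : wcount w S ≤ wcount w T) :
    ∃ N : Finset ℕ, gale S N ∧ gale N T ∧ N ≠ S ∧
      (∀ P : List (Finset ℕ), isChain S N P → P.length ≤ n) ∧
      ∀ M : Finset ℕ, gale S M → gale M N → wcount w M ≤ wcount w N := by
  obtain ⟨N, ⟨hSN, hNT, hNS, hwN⟩, hmin⟩ := (measure galeRank).wf.has_min
    {M | gale S M ∧ gale M T ∧ M ≠ S ∧ wcount w S ≤ wcount w M}
    ⟨T, hST, gale_refl T, hne.symm, hw'⟩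
  have hNcard := card_eq_of_gale hSN hNT hcard.symm
  have hmin' : ∀ M, gale S M → gale M N → M ≠ S → wcount w S ≤ wcount w M →
      galeRank N ≤ galeRank M :=
    fun M hSM hMN hMS hwM => not_lt.1 (hmin M ⟨hSM, gale_trans hMN hNT, hMS, hwM⟩)
  have hpos : 0 < S.card := Nat.pos_of_ne_zero fun h0 =>
    hne (by rw [card_eq_zero.1 h0, card_eq_zero.1 (hcard ▸ h0 : T.card = 0)])
  have hrank : galeRank N < galeRank S + n := by
    refine galeRank_lt_add_of_interlace hNcard hpos (mem_Icc.1 (hS (nth_mem hpos))).1 ?_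
      fun j hj => nth_le_nth_succ_of_minimal hSN hNcard hwN hmin' hj
    exact (hNT.2 _ (by omega)).trans (mem_Icc.1 (hT (nth_mem (by omega)))).2
  refine ⟨N, hSN, hNT, hNS, fun P hP => ?_, fun M hSM hMN =>
    wcount_le_of_minimal hNcard hwN hmin' hSM hMN⟩
  have := length_add_galeRank_le_of_isChain hNcard hP
  omega

theorem stmt_12 (n : ℕ) (w : List ℕ) (hw : ∀ x ∈ w, x ∈ Finset.Icc 1 n)
    (S T : Finset ℕ) (hS : S ⊆ Finset.Icc 1 n) (hT : T ⊆ Finset.Icc 1 n)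
    (hcard : S.card = T.card) (hST : gale S T) (hne : S ≠ T)
    (hw' : wcount w S ≤ wcount w T) :
    ∃ N : Finset ℕ, gale S N ∧ gale N T ∧ N ≠ S ∧
      (∀ P : List (Finset ℕ), isChain S N P → P.length ≤ n) ∧
      ∀ M : Finset ℕ, gale S M → gale M N → wcount w M ≤ wcount w N :=
  stmt_12_general n w S T hS hT hcard hST hne hw'
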